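/- Let f be given by an admissible representation f(z) = (−2π/(a·log z))·(1 + Σ_{n≥1} Φ_n(z)/(log z)^n). Then for real x > 0 the derivative satisfies the asymptotic relation x·(log x)²·f'(x) → 2π/a as x → 0⁺; more precisely f'(x) = (2π/(a·log²x))·[ (1/x)·(1 + O(1/log x)) + O(1) ] as x → 0⁺. In particular f'(x) > 0 for all sufficiently small x > 0. -/

import Mathlib

open Complex Filter Topology

/-- `Phi c n z = Σ_{k≥0} c_{n,k} z^k`. -/
noncomputable def Phi (c : ℕ → ℕ → ℝ) (n : ℕ) (z : ℂ) : ℂ :=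
  ∑' k : ℕ, (c n k : ℂ) * z ^ k

/-- Termwise derivative `Σ_{k≥1} k·c_{n,k} z^{k-1}`. -/
noncomputable def PhiD (c : ℕ → ℕ → ℝ) (n : ℕ) (z : ℂ) : ℂ :=
  ∑' k : ℕ, ((k + 1 : ℕ) : ℂ) * (c n (k + 1) : ℂ) * z ^ k

/-- `f(z) = (−2π/(a·log z))·(1 + Σ_{n≥1} Φ_n(z)/(log z)^n)`, where `Complex.log`
is the branch with `log i = iπ/2`, continuous on the closed upper half-plane minus `0`. -/
noncomputable def fRep (a : ℝ) (c : ℕ → ℕ → ℝ) (z : ℂ) : ℂ :=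
  (-(2 * (Real.pi : ℂ)) / ((a : ℂ) * Complex.log z)) *
    (1 + ∑' n : ℕ, Phi c (n + 1) z / (Complex.log z) ^ (n + 1))

/-- Admissibility of the representation `fRep a c`. -/
def Admissible (a : ℝ) (c : ℕ → ℕ → ℝ) : Prop :=
  0 < a ∧
  (∃ B : ℝ, ∀ n : ℕ, 1 ≤ n → ∀ k : ℕ, 1 ≤ k → |c n k| ^ ((1 : ℝ) / (k : ℝ)) ≤ B) ∧
  (∃ r > (0 : ℝ), ∃ M > (0 : ℝ), ∀ n : ℕ, 1 ≤ n → ∀ z : ℂ,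
      ‖z‖ ≤ r → 0 ≤ z.im → ‖Phi c n z‖ ≤ M ^ n) ∧
  (∃ r > (0 : ℝ), ∃ M > (0 : ℝ), ∀ n : ℕ, 1 ≤ n → ∀ z : ℂ,
      ‖z‖ ≤ r → 0 ≤ z.im → ‖PhiD c n z‖ ≤ M ^ n) ∧
  c 1 0 ≠ 0


/-!
On the positive axis put `s = (log x)⁻¹`, so that `f = -(2π/a) s (1 + Σ Φₙ₊₁ sⁿ⁺¹)` is real.
Once `M |s| ≤ 1/4`, the bounds `|Φₙ|, |Φₙ'| ≤ Mⁿ` dominate all the series involved, including the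
termwise derivative of `Σ Φₙ₊₁ sⁿ⁺¹`, by multiples of `2⁻ⁿ`, so that series may be differentiated
term by term; the growth bound on the coefficients makes `PhiD c n` the derivative of `Φₙ`.
With `s' = -s²/x` this gives `f' = (2π/a) s² (x⁻¹ (1 + δ₁) + δ₂)`, where
`δ₁ = Σ Φₙ₊₁ sⁿ⁺¹ + s Σ (n+1) Φₙ₊₁ sⁿ = O(s)` and `δ₂ = -Σ Φ'ₙ₊₁ sⁿ = O(1)`; the limit and the
positivity of `f'` follow.
-/

section GeometricBounds

variable {M s u : ℝ} {n : ℕ}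

theorem succ_mul_pow_le_half_pow {q : ℝ} (hq₀ : 0 ≤ q) (hq : q ≤ 1 / 4) (n : ℕ) :
    (n + 1 : ℝ) * q ^ n ≤ (1 / 2) ^ n := by
  have h2 : (n + 1 : ℝ) ≤ 2 ^ n := by exact_mod_cast Nat.lt_two_pow_self
  calc (n + 1 : ℝ) * q ^ n ≤ 2 ^ n * (1 / 4) ^ n := by gcongr
    _ = (1 / 2) ^ n := by rw [← mul_pow]; norm_num

theorem abs_succ_mul_mul_pow_le (hM : 0 ≤ M) (hu : |u| ≤ M ^ (n + 1)) (hs : M * |s| ≤ 1 / 4) :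
    |(n + 1) * u * s ^ n| ≤ M * (1 / 2) ^ n :=
  calc |(n + 1) * u * s ^ n| = (n + 1) * |u| * |s| ^ n := by
        rw [abs_mul, abs_mul, abs_pow, abs_of_pos (by positivity : (0 : ℝ) < n + 1)]
    _ ≤ (n + 1) * M ^ (n + 1) * |s| ^ n := by gcongr
    _ = M * ((n + 1) * (M * |s|) ^ n) := by ring
    _ ≤ M * (1 / 2) ^ n := by gcongr; exact succ_mul_pow_le_half_pow (by positivity) hs n

theorem abs_mul_pow_le (hM : 0 ≤ M) (hu : |u| ≤ M ^ (n + 1)) (hs : M * |s| ≤ 1 / 4) :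
    |u * s ^ n| ≤ M * (1 / 2) ^ n := by
  refine le_trans ?_ (abs_succ_mul_mul_pow_le hM hu hs)
  rw [mul_assoc, abs_mul (_ + 1), abs_of_pos (by positivity : (0 : ℝ) < n + 1)]
  exact le_mul_of_one_le_left (abs_nonneg _) (by linarith [n.cast_nonneg (α := ℝ)])

theorem abs_mul_pow_succ_le (hM : 0 ≤ M) (hu : |u| ≤ M ^ (n + 1)) (hs : M * |s| ≤ 1 / 4) :
    |u * s ^ (n + 1)| ≤ M * |s| * (1 / 2) ^ n := by
  calc |u * s ^ (n + 1)| = |u * s ^ n| * |s| := by rw [pow_succ, ← mul_assoc, abs_mul]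
    _ ≤ M * (1 / 2) ^ n * |s| := by gcongr; exact abs_mul_pow_le hM hu hs
    _ = M * |s| * (1 / 2) ^ n := by ring

theorem abs_tsum_le_of_le_half_pow {f : ℕ → ℝ} {A : ℝ} (h : ∀ n, |f n| ≤ A * (1 / 2) ^ n) :
    |∑' n, f n| ≤ 2 * A := by
  simpa [mul_comm] using tsum_of_norm_bounded (f := f) (hasSum_geometric_two.mul_left A) h

theorem summable_of_le_half_pow {f : ℕ → ℝ} {A : ℝ} (h : ∀ n, |f n| ≤ A * (1 / 2) ^ n) :
    Summable f :=
  .of_norm_bounded (summable_geometric_two.mul_left A) h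

end GeometricBounds

theorem hasDerivAt_tsum_coeff_mul_pow {d : ℕ → ℝ} {B t : ℝ} (hd : ∀ k, 1 ≤ k → |d k| ≤ B ^ k)
    (ht : B * |t| < 1) :
    HasDerivAt (fun y => ∑' k, d k * y ^ k) (∑' k, ((k + 1 : ℕ) : ℝ) * d (k + 1) * t ^ k) t := by
  have hB : 0 ≤ B := (abs_nonneg _).trans (by simpa using hd 1 le_rfl)
  obtain ⟨ρ, hρ, htρ⟩ : ∃ ρ, B * ρ < 1 ∧ |t| < ρ :=
    ((((continuous_const_mul B).tendsto |t|).eventually (gt_mem_nhds ht)).filter_mono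
      nhdsWithin_le_nhds |>.and (self_mem_nhdsWithin (s := Set.Ioi |t|))).exists
  have hρ₀ : 0 < ρ := (abs_nonneg t).trans_lt htρ
  have ht_mem : t ∈ Metric.ball (0 : ℝ) ρ := by simpa using htρ
  have hderiv_le : ∀ k, ∀ y ∈ Metric.ball (0 : ℝ) ρ,
      ‖d k * (k * y ^ (k - 1))‖ ≤ ρ⁻¹ * (k * (B * ρ) ^ k) := by
    rintro (_ | k) y hy
    · simp
    have hy : |y| ≤ ρ := by simpa using (Metric.mem_ball.1 hy).le
    calc ‖d (k + 1) * ((k + 1 : ℕ) * y ^ k)‖ = |d (k + 1)| * ((k + 1 : ℕ) * |y| ^ k) := by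
          rw [norm_mul, norm_mul, norm_pow, Real.norm_natCast, Real.norm_eq_abs, Real.norm_eq_abs]
      _ ≤ B ^ (k + 1) * ((k + 1 : ℕ) * ρ ^ k) := by gcongr; exact hd _ k.succ_pos
      _ = ρ⁻¹ * ((k + 1 : ℕ) * (B * ρ) ^ (k + 1)) := by field_simp; ring
  have hsum : Summable fun k : ℕ => ρ⁻¹ * (k * (B * ρ) ^ k) :=
    (hasSum_coe_mul_geometric_of_norm_lt_one (r := B * ρ)
      (by rwa [Real.norm_of_nonneg (by positivity)])).summable.mul_left _
  have hsum_t : Summable fun k => d k * (k * t ^ (k - 1)) :=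
    .of_norm_bounded hsum fun k => hderiv_le k t ht_mem
  have key := hasDerivAt_tsum_of_isPreconnected hsum Metric.isOpen_ball
    (convex_ball 0 ρ).isPreconnected (fun k y _ => (hasDerivAt_pow k y).const_mul (d k))
    hderiv_le (Metric.mem_ball_self hρ₀)
    (hasSum_single 0 fun k hk => by simp [zero_pow hk]).summable ht_mem
  rw [hsum_t.tsum_eq_zero_add] at key
  refine key.congr_deriv ?_
  simp only [Nat.cast_zero, zero_mul, mul_zero, zero_add, Nat.add_sub_cancel]
  exact tsum_congr fun k => by ring

theorem hasDerivAt_tsum_mul_pow_succ {g g' : ℕ → ℝ → ℝ} {s s' : ℝ → ℝ} {M K x : ℝ}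
    (hM : 0 ≤ M)
    (h : ∀ᶠ y in 𝓝 x, HasDerivAt s (s' y) y ∧ M * |s y| ≤ 1 / 4 ∧ |s' y| ≤ K ∧
      ∀ n, HasDerivAt (g n) (g' n y) y ∧ |g n y| ≤ M ^ (n + 1) ∧ |g' n y| ≤ M ^ (n + 1)) :
    HasDerivAt (fun y => ∑' n, g n y * s y ^ (n + 1))
      (s x * ∑' n, g' n x * s x ^ n + s' x * ∑' n, (n + 1) * g n x * s x ^ n) x := by
  obtain ⟨ε, hε, hball⟩ := Metric.eventually_nhds_iff_ball.1 h
  have hterm : ∀ n, ∀ y ∈ Metric.ball x ε, HasDerivAt (fun y => g n y * s y ^ (n + 1))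
      (s y * (g' n y * s y ^ n) + s' y * ((n + 1) * g n y * s y ^ n)) y := by
    intro n y hy
    obtain ⟨hs, -, -, hg⟩ := hball y hy
    refine ((hg n).1.mul (hs.fun_pow (n + 1))).congr_deriv ?_
    rw [Nat.add_sub_cancel]
    push_cast
    ring
  have hterm_le : ∀ n, ∀ y ∈ Metric.ball x ε,
      ‖s y * (g' n y * s y ^ n) + s' y * ((n + 1) * g n y * s y ^ n)‖ ≤
        (1 + K * M) * (1 / 2) ^ n := by
    intro n y hy
    obtain ⟨-, hsM, hs', hg⟩ := hball y hy
    have h₁ : |s y * (g' n y * s y ^ n)| ≤ M * |s y| * (1 / 2) ^ n := by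
      rw [abs_mul, mul_comm M, mul_assoc]
      exact mul_le_mul_of_nonneg_left (abs_mul_pow_le hM (hg n).2.2 hsM) (abs_nonneg _)
    have h₂ : |s' y * ((n + 1) * g n y * s y ^ n)| ≤ K * (M * (1 / 2) ^ n) := by
      rw [abs_mul]
      exact mul_le_mul hs' (abs_succ_mul_mul_pow_le hM (hg n).2.1 hsM) (abs_nonneg _)
        ((abs_nonneg _).trans hs')
    calc _ ≤ _ := abs_add_le _ _
      _ ≤ M * |s y| * (1 / 2) ^ n + K * (M * (1 / 2) ^ n) := add_le_add h₁ h₂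
      _ ≤ (1 + K * M) * (1 / 2) ^ n := by nlinarith [pow_pos (by norm_num : (0 : ℝ) < 1 / 2) n]
  obtain ⟨-, hsM, -, hg⟩ := hball x (Metric.mem_ball_self hε)
  have key := hasDerivAt_tsum_of_isPreconnected (summable_geometric_two.mul_left (1 + K * M))
    Metric.isOpen_ball (convex_ball x ε).isPreconnected hterm hterm_le (Metric.mem_ball_self hε)
    (summable_of_le_half_pow fun n => abs_mul_pow_succ_le hM (hg n).2.1 hsM)
    (Metric.mem_ball_self hε)
  have hA : Summable fun n => g' n x * s x ^ n :=
    summable_of_le_half_pow fun n => abs_mul_pow_le hM (hg n).2.2 hsM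
  have hT : Summable fun n => (n + 1) * g n x * s x ^ n :=
    summable_of_le_half_pow fun n => abs_succ_mul_mul_pow_le hM (hg n).2.1 hsM
  rwa [(hA.mul_left (s x)).tsum_add (hT.mul_left (s' x)), tsum_mul_left, tsum_mul_left] at key

theorem inv_log_deriv_bounds {M x y : ℝ} (hM : 0 ≤ M) (hx : 0 < x) (hxy : x / 2 < y)
    (hy : Real.log y ≤ -(4 * M + 1)) :
    HasDerivAt (fun t => (Real.log t)⁻¹) (-y⁻¹ / Real.log y ^ 2) y ∧
      M * |(Real.log y)⁻¹| ≤ 1 / 4 ∧ |-y⁻¹ / Real.log y ^ 2| ≤ 2 / x := by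
  have hy0 : 0 < y := by linarith
  have hly : 4 * M + 1 ≤ |Real.log y| := by rw [abs_of_neg (by linarith)]; linarith
  refine ⟨(Real.hasDerivAt_log hy0.ne').inv (by linarith), ?_, ?_⟩
  · rw [abs_inv, ← div_eq_mul_inv, div_le_iff₀ (by linarith)]
    linarith
  · have hy_inv : y⁻¹ ≤ 2 / x := by
      rw [inv_eq_one_div, div_le_div_iff₀ hy0 hx]; linarith
    have hlog_sq : 1 ≤ |Real.log y| ^ 2 := one_le_pow₀ (by linarith)
    rw [abs_div, abs_neg, abs_inv, abs_of_pos hy0, abs_pow, div_le_iff₀ (by linarith)]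
    exact hy_inv.trans (le_mul_of_one_le_right (by positivity) hlog_sq)

theorem eventually_hasDerivAt_neg_inv_log_mul {g g' : ℕ → ℝ → ℝ} {M : ℝ} (hM : 0 ≤ M)
    (h : ∀ᶠ t in 𝓝[>] 0, ∀ n,
      HasDerivAt (g n) (g' n t) t ∧ |g n t| ≤ M ^ (n + 1) ∧ |g' n t| ≤ M ^ (n + 1)) :
    ∀ᶠ x in 𝓝[>] 0, ∃ δ₁ δ₂ : ℝ, |δ₁| ≤ 4 * M / |Real.log x| ∧ |δ₂| ≤ 2 * M ∧
      HasDerivAt (fun t => -(Real.log t)⁻¹ * (1 + ∑' n, g n t * (Real.log t)⁻¹ ^ (n + 1)))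
        ((Real.log x ^ 2)⁻¹ * (x⁻¹ * (1 + δ₁) + δ₂)) x := by
  have hlog : ∀ᶠ t in 𝓝[>] (0 : ℝ), Real.log t ≤ -(4 * M + 1) :=
    Real.tendsto_log_nhdsGT_zero.eventually (eventually_le_atBot _)
  -- the hypotheses on `g` and the smallness of `(log t)⁻¹` hold on a whole neighbourhood of `x`
  filter_upwards [eventually_eventually_nhdsWithin.2 ((eventually_mem_nhdsWithin.and hlog).and h),
    self_mem_nhdsWithin] with x hx (hx0 : 0 < x)
  rw [nhdsWithin_eq_nhds.2 (Ioi_mem_nhds hx0)] at hx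
  have hS := hasDerivAt_tsum_mul_pow_succ hM (g := g) (g' := g') (s := fun t => (Real.log t)⁻¹)
    (s' := fun t => -t⁻¹ / Real.log t ^ 2) (K := 2 / x) <| by
    filter_upwards [hx, Ioi_mem_nhds (half_lt_self hx0)] with y ⟨⟨_, hy⟩, hgy⟩ (hxy : x / 2 < y)
    obtain ⟨hs, hsM, hs'⟩ := inv_log_deriv_bounds hM hx0 hxy hy
    exact ⟨hs, hsM, hs', hgy⟩
  obtain ⟨⟨-, hL⟩, hg⟩ := hx.self_of_nhds
  obtain ⟨hs, hsM, -⟩ := inv_log_deriv_bounds hM hx0 (half_lt_self hx0) hL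
  have hF := hs.fun_neg.fun_mul (hS.const_add 1)
  have hL₀ : Real.log x ≠ 0 := by linarith
  set L := Real.log x
  have hS_le : |∑' n, g n x * L⁻¹ ^ (n + 1)| ≤ 2 * (M * |L⁻¹|) :=
    abs_tsum_le_of_le_half_pow fun n => abs_mul_pow_succ_le hM (hg n).2.1 hsM
  have hT_le : |∑' n, (n + 1) * g n x * L⁻¹ ^ n| ≤ 2 * M :=
    abs_tsum_le_of_le_half_pow fun n => abs_succ_mul_mul_pow_le hM (hg n).2.1 hsM
  have hA_le : |∑' n, g' n x * L⁻¹ ^ n| ≤ 2 * M :=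
    abs_tsum_le_of_le_half_pow fun n => abs_mul_pow_le hM (hg n).2.2 hsM
  set S := ∑' n, g n x * L⁻¹ ^ (n + 1)
  set T := ∑' n, (n + 1) * g n x * L⁻¹ ^ n
  set A := ∑' n, g' n x * L⁻¹ ^ n
  refine ⟨S + L⁻¹ * T, -A, ?_, by rwa [abs_neg], ?_⟩
  · calc _ ≤ _ := abs_add_le _ _
      _ ≤ 2 * (M * |L⁻¹|) + |L⁻¹| * (2 * M) := by
        rw [abs_mul]; gcongr
      _ = 4 * M / |L| := by rw [abs_inv]; ring
  · refine hF.congr_deriv ?_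
    field_simp
    ring

section LogExpansion

variable {D : ℝ → ℝ} {K C : ℝ}

theorem tendsto_mul_log_sq_mul_of_expansion
    (h : ∀ᶠ x in 𝓝[>] 0, ∃ δ₁ δ₂ : ℝ, |δ₁| ≤ C / |Real.log x| ∧ |δ₂| ≤ C ∧
      D x = K / Real.log x ^ 2 * (x⁻¹ * (1 + δ₁) + δ₂)) :
    Tendsto (fun x => x * Real.log x ^ 2 * D x) (𝓝[>] 0) (𝓝 K) := by
  have hlog : Tendsto (fun x => |Real.log x|) (𝓝[>] 0) atTop :=
    tendsto_abs_atBot_atTop.comp Real.tendsto_log_nhdsGT_zero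
  have hbound : Tendsto (fun x => |K| * (C / |Real.log x| + x * C)) (𝓝[>] 0) (𝓝 0) := by
    have hx : Tendsto (fun x : ℝ => x) (𝓝[>] 0) (𝓝 0) :=
      tendsto_nhdsWithin_of_tendsto_nhds tendsto_id
    simpa using ((tendsto_const_nhds.div_atTop hlog).add (hx.mul_const C)).const_mul |K|
  rw [← tendsto_sub_nhds_zero_iff]
  refine squeeze_zero_norm' ?_ hbound
  filter_upwards [h, self_mem_nhdsWithin,
    Real.tendsto_log_nhdsGT_zero.eventually (eventually_lt_atBot 0)]
    with x ⟨δ₁, δ₂, hδ₁, hδ₂, hD⟩ (hx : 0 < x) hL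
  have hxD : x * Real.log x ^ 2 * D x - K = K * (δ₁ + x * δ₂) := by
    rw [hD]
    field_simp [hL.ne]
    ring
  rw [hxD, Real.norm_eq_abs, abs_mul]
  gcongr
  calc |δ₁ + x * δ₂| ≤ |δ₁| + x * |δ₂| :=
        (abs_add_le _ _).trans_eq (by rw [abs_mul, abs_of_pos hx])
    _ ≤ C / |Real.log x| + x * C := by gcongr

theorem eventually_pos_of_expansion (hK : 0 < K)
    (h : ∀ᶠ x in 𝓝[>] 0, ∃ δ₁ δ₂ : ℝ, |δ₁| ≤ C / |Real.log x| ∧ |δ₂| ≤ C ∧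
      D x = K / Real.log x ^ 2 * (x⁻¹ * (1 + δ₁) + δ₂)) :
    ∀ᶠ x in 𝓝[>] 0, 0 < D x := by
  have hlog : ∀ᶠ x in 𝓝[>] (0 : ℝ), Real.log x ≤ -(2 * C + 1) :=
    Real.tendsto_log_nhdsGT_zero.eventually (eventually_le_atBot _)
  have hsmall : ∀ᶠ x in 𝓝[>] (0 : ℝ), x * (2 * C + 1) < 1 :=
    ((tendsto_nhdsWithin_of_tendsto_nhds tendsto_id).mul_const _).eventually
      (gt_mem_nhds (by simp))
  filter_upwards [h, hlog, hsmall, self_mem_nhdsWithin]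
    with x ⟨δ₁, δ₂, hδ₁, hδ₂, hD⟩ hL hxC (hx : 0 < x)
  have hC : 0 ≤ C := (abs_nonneg _).trans hδ₂
  have hδ₁_half : 1 / 2 ≤ 1 + δ₁ := by
    have hL' : 2 * C + 1 ≤ |Real.log x| := by rw [abs_of_neg (by linarith)]; linarith
    have : C / |Real.log x| ≤ 1 / 2 := by rw [div_le_iff₀ (by linarith)]; linarith
    linarith [neg_abs_le δ₁]
  have hx_inv : 2 * C + 1 < x⁻¹ := by rw [← one_div, lt_div_iff₀ hx]; linarith
  rw [hD]
  refine mul_pos (div_pos hK (sq_pos_of_neg (by linarith))) ?_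
  nlinarith [neg_abs_le δ₂, mul_le_mul_of_nonneg_left hδ₁_half (inv_nonneg.2 hx.le)]

end LogExpansion

theorem le_pow_of_rpow_one_div_le {x B : ℝ} {k : ℕ} (hk : k ≠ 0) (hx : 0 ≤ x)
    (h : x ^ ((1 : ℝ) / k) ≤ B) : x ≤ B ^ k := by
  have hB : 0 ≤ B := (Real.rpow_nonneg hx _).trans h
  rw [one_div, Real.rpow_inv_le_iff_of_pos hx hB (by positivity)] at h
  exact_mod_cast h

noncomputable def realPhi (c : ℕ → ℕ → ℝ) (n : ℕ) (t : ℝ) : ℝ :=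
  ∑' k : ℕ, c n k * t ^ k

noncomputable def realPhiD (c : ℕ → ℕ → ℝ) (n : ℕ) (t : ℝ) : ℝ :=
  ∑' k : ℕ, ((k + 1 : ℕ) : ℝ) * c n (k + 1) * t ^ k

theorem ofReal_realPhi (c : ℕ → ℕ → ℝ) (n : ℕ) (t : ℝ) : (realPhi c n t : ℂ) = Phi c n t := by
  simp [realPhi, Phi, Complex.ofReal_tsum]

theorem ofReal_realPhiD (c : ℕ → ℕ → ℝ) (n : ℕ) (t : ℝ) :
    (realPhiD c n t : ℂ) = PhiD c n t := by
  simp [realPhiD, PhiD, Complex.ofReal_tsum]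

theorem fRep_ofReal (a : ℝ) (c : ℕ → ℕ → ℝ) {t : ℝ} (ht : 0 ≤ t) :
    fRep a c t = ((2 * Real.pi / a * (-(Real.log t)⁻¹ *
      (1 + ∑' n, realPhi c (n + 1) t * (Real.log t)⁻¹ ^ (n + 1))) : ℝ) : ℂ) := by
  simp only [fRep, ← Complex.ofReal_log ht, ← ofReal_realPhi]
  push_cast [Complex.ofReal_tsum]
  simp only [div_eq_mul_inv, mul_inv, inv_pow]
  ring

theorem Admissible.eventually_hasDerivAt_realPhi {a : ℝ} {c : ℕ → ℕ → ℝ} (hadm : Admissible a c) :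
    ∃ M > 0, ∀ᶠ t in 𝓝[>] 0, ∀ n, HasDerivAt (realPhi c (n + 1)) (realPhiD c (n + 1) t) t ∧
      |realPhi c (n + 1) t| ≤ M ^ (n + 1) ∧ |realPhiD c (n + 1) t| ≤ M ^ (n + 1) := by
  obtain ⟨-, ⟨B, hB⟩, ⟨r₁, hr₁, M₁, hM₁, hPhi⟩, ⟨r₂, hr₂, M₂, hM₂, hPhiD⟩, -⟩ := hadm
  have habs : Tendsto (fun t : ℝ => |t|) (𝓝[>] 0) (𝓝 0) :=
    (continuous_abs.tendsto' 0 0 abs_zero).mono_left nhdsWithin_le_nhds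
  refine ⟨max M₁ M₂, lt_max_of_lt_left hM₁, ?_⟩
  filter_upwards [habs.eventually (gt_mem_nhds hr₁), habs.eventually (gt_mem_nhds hr₂),
    (habs.const_mul B).eventually (gt_mem_nhds (by simp : B * 0 < 1))] with t ht₁ ht₂ htB n
  have hnorm : ‖(t : ℂ)‖ = |t| := Complex.norm_real t
  refine ⟨hasDerivAt_tsum_coeff_mul_pow
    (fun k hk => le_pow_of_rpow_one_div_le (by omega) (abs_nonneg _) (hB _ n.succ_pos k hk)) htB,
    ?_, ?_⟩
  · rw [← Real.norm_eq_abs, ← Complex.norm_real, ofReal_realPhi]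
    exact (hPhi _ n.succ_pos _ (hnorm ▸ ht₁.le) (by simp)).trans
      (pow_le_pow_left₀ hM₁.le (le_max_left _ _) _)
  · rw [← Real.norm_eq_abs, ← Complex.norm_real, ofReal_realPhiD]
    exact (hPhiD _ n.succ_pos _ (hnorm ▸ ht₂.le) (by simp)).trans
      (pow_le_pow_left₀ hM₂.le (le_max_right _ _) _)

theorem Admissible.eventually_hasDerivAt_fRep {a : ℝ} {c : ℕ → ℕ → ℝ} (hadm : Admissible a c) :
    ∃ C > 0, ∀ᶠ x in 𝓝[>] 0, ∃ δ₁ δ₂ : ℝ, |δ₁| ≤ C / |Real.log x| ∧ |δ₂| ≤ C ∧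
      HasDerivAt (fun t : ℝ => fRep a c t)
        ((2 * Real.pi / a / Real.log x ^ 2 * (x⁻¹ * (1 + δ₁) + δ₂) : ℝ) : ℂ) x := by
  obtain ⟨M, hM, hPhi⟩ := hadm.eventually_hasDerivAt_realPhi
  refine ⟨4 * M, by positivity, ?_⟩
  filter_upwards [eventually_hasDerivAt_neg_inv_log_mul hM.le hPhi, self_mem_nhdsWithin]
    with x ⟨δ₁, δ₂, hδ₁, hδ₂, hderiv⟩ (hx : 0 < x)
  refine ⟨δ₁, δ₂, hδ₁, by linarith, ?_⟩
  refine ((hderiv.const_mul (2 * Real.pi / a)).ofReal_comp.congr_of_eventuallyEq ?_).congr_deriv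
    (by congr 1; ring)
  filter_upwards [Ioi_mem_nhds hx] with t ht using fRep_ofReal a c (le_of_lt ht)

/-- Asymptotics of `f'(x)` for `x → 0⁺`: `x·(log x)²·f'(x) → 2π/a`, with the precise form
`f'(x) = (2π/(a log²x))·[(1/x)(1 + O(1/log x)) + O(1)]`, so that `f'(x) > 0` for small `x > 0`. -/
theorem stmt8 (a : ℝ) (c : ℕ → ℕ → ℝ) (hadm : Admissible a c) :
    Filter.Tendsto
      (fun x : ℝ => ((x * (Real.log x) ^ 2 : ℝ) : ℂ) * deriv (fun t : ℝ => fRep a c (t : ℂ)) x)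
      (nhdsWithin 0 (Set.Ioi (0 : ℝ))) (nhds ((2 * Real.pi / a : ℝ) : ℂ)) ∧
    (∃ C > (0 : ℝ), ∀ᶠ x in nhdsWithin 0 (Set.Ioi (0 : ℝ)), ∃ δ₁ δ₂ : ℂ,
      ‖δ₁‖ ≤ C / |Real.log x| ∧ ‖δ₂‖ ≤ C ∧
      deriv (fun t : ℝ => fRep a c (t : ℂ)) x =
        ((2 * Real.pi / (a * (Real.log x) ^ 2) : ℝ) : ℂ) * ((1 / (x : ℂ)) * (1 + δ₁) + δ₂)) ∧
    (∀ᶠ x in nhdsWithin 0 (Set.Ioi (0 : ℝ)),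
      (deriv (fun t : ℝ => fRep a c (t : ℂ)) x).im = 0 ∧
      0 < (deriv (fun t : ℝ => fRep a c (t : ℂ)) x).re) := by
  obtain ⟨C, hC, hexp⟩ := hadm.eventually_hasDerivAt_fRep
  set F := fun t : ℝ => fRep a c (t : ℂ)
  have hreal : ∀ᶠ x in 𝓝[>] 0, deriv F x = (deriv F x).re := by
    filter_upwards [hexp] with x ⟨_, _, _, _, hderiv⟩
    rw [hderiv.deriv, Complex.ofReal_re]
  have hexp_re : ∀ᶠ x in 𝓝[>] 0, ∃ δ₁ δ₂ : ℝ, |δ₁| ≤ C / |Real.log x| ∧ |δ₂| ≤ C ∧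
      (deriv F x).re = 2 * Real.pi / a / Real.log x ^ 2 * (x⁻¹ * (1 + δ₁) + δ₂) := by
    filter_upwards [hexp] with x ⟨δ₁, δ₂, hδ₁, hδ₂, hderiv⟩
    exact ⟨δ₁, δ₂, hδ₁, hδ₂, by rw [hderiv.deriv, Complex.ofReal_re]⟩
  refine ⟨?_, ⟨C, hC, ?_⟩, ?_⟩
  · refine (tendsto_mul_log_sq_mul_of_expansion hexp_re).ofReal.congr' ?_
    filter_upwards [hreal] with x hx
    rw [hx]
    push_cast
    rfl
  · filter_upwards [hexp] with x ⟨δ₁, δ₂, hδ₁, hδ₂, hderiv⟩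
    refine ⟨δ₁, δ₂, by simpa, by simpa, ?_⟩
    rw [hderiv.deriv]
    push_cast
    ring
  · filter_upwards [hreal, eventually_pos_of_expansion (div_pos Real.two_pi_pos hadm.1) hexp_re]
      with x hx hpos
    exact ⟨by rw [hx, Complex.ofReal_im], hpos⟩
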